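/- Fix t > 0 and n ≥ 2. For every x in the high-density set F_t := {x ∈ R^d : p_t(x) ≥ c_η η_t} with η_t := log n/(n(2πt)^{d/2}) and c_η := max(4C_E, 2), the soft-thresholded kernel score estimator satisfies E[‖ŝ_t(x) − s_t(x)‖₂² · 1{E_t(x)}] ≲ (1/(n(2πt)^{d/2}))·(1/t + ‖s_t(x)‖₂²)·(1/p_t(x)), with an absolute implied constant. -/

import Mathlib

open MeasureTheory ProbabilityTheory Real
open scoped InnerProductSpace ENNReal NNReal BigOperators

noncomputable section

/-- `ℝ^d` with the Euclidean norm. -/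
abbrev Vec (d : ℕ) := EuclideanSpace ℝ (Fin d)

/-- Density `φ_t` of the Gaussian `N(0, t I_d)` on `ℝ^d`. -/
def gaussKernel (d : ℕ) (t : ℝ) (x : Vec d) : ℝ :=
  (2 * π * t) ^ (-(d : ℝ) / 2) * Real.exp (-‖x‖ ^ 2 / (2 * t))

/-- The standard Gaussian `N(0, I_d)` on `ℝ^d`. -/
def stdGaussian (d : ℕ) : Measure (Vec d) :=
  (Measure.pi fun _ : Fin d => gaussianReal 0 1).map (EuclideanSpace.equiv (Fin d) ℝ).symm

/-- Law of `Z_t = Z₀ + √t · W` where `Z₀ ∼ P` and `W ∼ N(0, I_d)` independent. -/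
def lawVE {d : ℕ} (P : Measure (Vec d)) (t : ℝ) : Measure (Vec d) :=
  (P.prod (stdGaussian d)).map fun p => p.1 + Real.sqrt t • p.2

/-- Density `p_t = φ_t ∗ p₀` of `Z_t`. -/
def densVE {d : ℕ} (P : Measure (Vec d)) (t : ℝ) (x : Vec d) : ℝ :=
  ∫ y, gaussKernel d t (x - y) ∂P

/-- Score function `∇ log f` associated with a density `f`. -/
def scoreOf {d : ℕ} (f : Vec d → ℝ) (x : Vec d) : Vec d :=
  (f x)⁻¹ • gradient f x

/-- Score function `s_t` of `Z_t`. -/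
def scoreVE {d : ℕ} (P : Measure (Vec d)) (t : ℝ) : Vec d → Vec d :=
  scoreOf (densVE P t)

/-- Gaussian kernel density estimator `p̂_t` built from data `X`. -/
def kde {d n : ℕ} (t : ℝ) (X : Fin n → Vec d) (x : Vec d) : ℝ :=
  (n : ℝ)⁻¹ * ∑ i, gaussKernel d t (X i - x)

/-- Threshold `η_t = log n / (n (2πt)^{d/2})`. -/
def etaThr (d n : ℕ) (t : ℝ) : ℝ :=
  Real.log n / (n * (2 * π * t) ^ ((d : ℝ) / 2))

/-- The soft-thresholding function `ψ(x; η)`. -/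
def softThresh (η x : ℝ) : ℝ :=
  if η ≤ x then 1
  else if x ≤ η / 2 then 0
  else (1 + Real.exp ((1 - 2 * (2 * x / η - 1)) /
      ((2 * x / η - 1) * (2 - 2 * x / η))))⁻¹

/-- Soft-thresholded kernel score estimator `ŝ_t`. -/
def scoreEst {d n : ℕ} (t : ℝ) (X : Fin n → Vec d) (x : Vec d) : Vec d :=
  (softThresh (etaThr d n t) (kde t X x) / kde t X x) • gradient (kde t X) x

/-- Cumulative learning rates `ᾱ_k` of the schedule. -/
def abar (K : ℕ) (c0 c1 : ℝ) : ℕ → ℝ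
  | 0 => 1
  | 1 => 1 - (K : ℝ) ^ (-c0)
  | k + 2 =>
      abar K c0 c1 (k + 1) -
        c1 * Real.log K / K * (abar K c0 c1 (k + 1) * (1 - abar K c0 c1 (k + 1)))

/-- Learning rates `α_k = ᾱ_k / ᾱ_{k-1}`. -/
def alphak (K : ℕ) (c0 c1 : ℝ) (k : ℕ) : ℝ :=
  abar K c0 c1 k / abar K c0 c1 (k - 1)

/-- Law of `√a · X₀ + √(1-a) · W` where `X₀ ∼ P0` and `W ∼ N(0, I_d)` independent. -/
def forwardLaw {d : ℕ} (P0 : Measure (Vec d)) (a : ℝ) : Measure (Vec d) :=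
  (P0.prod (stdGaussian d)).map fun p => Real.sqrt a • p.1 + Real.sqrt (1 - a) • p.2

/-- Density of `√a · X₀ + √(1-a) · W`. -/
def densForward {d : ℕ} (P0 : Measure (Vec d)) (a : ℝ) (x : Vec d) : ℝ :=
  ∫ y, gaussKernel d (1 - a) (x - Real.sqrt a • y) ∂P0

/-- One step of the probability flow ODE sampler:
`y ↦ (1/√α) (y + ((1-α)/2) ŝ(y))`. -/
def samplerStep {d : ℕ} (α : ℝ) (shat : Vec d → Vec d) (y : Vec d) : Vec d :=
  (Real.sqrt α)⁻¹ • (y + ((1 - α) / 2) • shat y)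

/-- `runSampler α shat K y` is the value `Y₁` of the sampler started at `Y_K = y`. -/
def runSampler {d : ℕ} (α : ℕ → ℝ) (shat : ℕ → Vec d → Vec d) : ℕ → Vec d → Vec d
  | 0, y => y
  | 1, y => y
  | k + 2, y => runSampler α shat (k + 1) (samplerStep (α (k + 2)) (shat (k + 2)) y)

/-- Total variation distance between two measures. -/
def tvDist {Ω : Type*} [MeasurableSpace Ω] (μ ν : Measure Ω) : ℝ :=
  ⨆ s : { s : Set Ω // MeasurableSet s }, |(μ s.1).toReal - (ν s.1).toReal|

/-- `P` is a `σ`-subgaussian distribution on `ℝ^d`. -/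
def IsSubgaussian {d : ℕ} (σ : ℝ) (P : Measure (Vec d)) : Prop :=
  ∀ θ : Vec d, ‖θ‖ = 1 → ∫ x, Real.exp ((⟪x, θ⟫_ℝ / σ) ^ 2) ∂P ≤ 2

/-- `f` is a `β`-Hölder smooth function with constant `L` (Assumption 2). -/
def HolderSmoothDensity {d : ℕ} (β L : ℝ) (f : Vec d → ℝ) : Prop :=
  ContDiff ℝ (⌈β⌉₊ - 1 : ℕ) f ∧
    ∀ m : ℕ, m ≤ ⌈β⌉₊ - 1 → ∀ x x' : Vec d,
      ‖iteratedFDeriv ℝ m f x - iteratedFDeriv ℝ m f x'‖ ≤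
        L * ‖x - x'‖ ^ (β - (⌈β⌉₊ - 1 : ℕ))

/-- Score estimator for the forward process: `ŝ_{X_k}(x) = ŝ_{t_k}(x/√ᾱ_k)/√ᾱ_k`
with `t_k = (1-ᾱ_k)/ᾱ_k + τ`. -/
def scoreEstX {d n : ℕ} (τ a : ℝ) (X : Fin n → Vec d) (x : Vec d) : Vec d :=
  (Real.sqrt a)⁻¹ • scoreEst ((1 - a) / a + τ) X ((Real.sqrt a)⁻¹ • x)

/-- Outer product `v v^⊤` as a continuous linear map. -/
def outerCLM {d : ℕ} (v : Vec d) : Vec d →L[ℝ] Vec d :=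
  (innerSL ℝ v).smulRight v

/-- Empirical matrix `Ĥ_t(x) = (1/(n t²)) Σᵢ (Xᵢ-x)(Xᵢ-x)^⊤ φ_t(Xᵢ-x)`. -/
def hHat {d n : ℕ} (t : ℝ) (X : Fin n → Vec d) (x : Vec d) : Vec d →L[ℝ] Vec d :=
  ((n : ℝ) * t ^ 2)⁻¹ • ∑ i, gaussKernel d t (X i - x) • outerCLM (X i - x)

/-- Population matrix `H_t(x) = (1/t²) E[(Z₀-x)(Z₀-x)^⊤ φ_t(Z₀-x)]`. -/
def hBar {d : ℕ} (P : Measure (Vec d)) (t : ℝ) (x : Vec d) : Vec d →L[ℝ] Vec d :=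
  (t ^ 2)⁻¹ • ∫ y, gaussKernel d t (y - x) • outerCLM (y - x) ∂P

/-- Empirical gradient `ĝ_t(x) = (1/(n t)) Σᵢ (Xᵢ-x) φ_t(Xᵢ-x)`. -/
def gHat {d n : ℕ} (t : ℝ) (X : Fin n → Vec d) (x : Vec d) : Vec d :=
  ((n : ℝ) * t)⁻¹ • ∑ i, gaussKernel d t (X i - x) • (X i - x)

/-- Population gradient `g_t(x) = (1/t) E[(Z₀-x) φ_t(Z₀-x)]`. -/
def gBar {d : ℕ} (P : Measure (Vec d)) (t : ℝ) (x : Vec d) : Vec d :=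
  t⁻¹ • ∫ y, gaussKernel d t (y - x) • (y - x) ∂P


namespace S15

lemma sexp_le_one {s : ℝ} (hs : 0 ≤ s) : s * Real.exp (-s) ≤ 1 := by
  rw [Real.exp_neg]
  rw [mul_inv_le_iff₀ (Real.exp_pos s), one_mul]
  nlinarith [Real.add_one_le_exp s]

lemma sexp_le_exp_half {s : ℝ} (hs : 0 ≤ s) : s * Real.exp (-s) ≤ Real.exp (-(s/2)) := by
  have h : Real.exp (-s) = Real.exp (-(s/2)) * Real.exp (-(s/2)) := by
    rw [← Real.exp_add]; ring_nf
  rw [h, ← mul_assoc]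
  have h2 : s * Real.exp (-(s/2)) ≤ 1 := by
    rw [Real.exp_neg, mul_inv_le_iff₀ (Real.exp_pos _), one_mul]
    have := Real.add_one_le_exp (s/4)
    have h4 : Real.exp (s/2) = Real.exp (s/4) * Real.exp (s/4) := by
      rw [← Real.exp_add]; ring_nf
    nlinarith [Real.exp_pos (s/4), sq_nonneg (1 - s/4)]
  nlinarith [Real.exp_pos (-(s/2))]

variable {d : ℕ} {t : ℝ}

lemma gaussKernel_pos (ht : 0 < t) (u : Vec d) : 0 < gaussKernel d t u := by
  have h2 : (0:ℝ) < 2 * π * t := by positivity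
  exact mul_pos (Real.rpow_pos_of_pos h2 _) (Real.exp_pos _)

lemma gaussKernel_le (ht : 0 < t) (u : Vec d) :
    gaussKernel d t u ≤ (2 * π * t) ^ (-(d : ℝ) / 2) := by
  have h2 : (0:ℝ) < 2 * π * t := by positivity
  calc gaussKernel d t u ≤ (2 * π * t) ^ (-(d : ℝ) / 2) * 1 := by
        unfold gaussKernel
        apply mul_le_mul_of_nonneg_left _ (le_of_lt (Real.rpow_pos_of_pos h2 _))
        exact Real.exp_le_one_iff.mpr (div_nonpos_of_nonpos_of_nonneg (neg_nonpos.mpr (sq_nonneg _)) (by positivity))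
    _ = _ := mul_one _

lemma gaussKernel_symm (a b : Vec d) : gaussKernel d t (a - b) = gaussKernel d t (b - a) := by
  unfold gaussKernel
  rw [← norm_neg (a - b)]; simp

lemma gaussKernel_continuous (ht : 0 < t) : Continuous (gaussKernel d t) := by
  unfold gaussKernel
  fun_prop

lemma gaussKernel_sq_le (ht : 0 < t) (u : Vec d) :
    gaussKernel d t u ^ 2 ≤ (2 * π * t) ^ (-(d : ℝ) / 2) * gaussKernel d t u := by
  rw [sq]
  exact mul_le_mul_of_nonneg_right (gaussKernel_le ht u) (le_of_lt (gaussKernel_pos ht u))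

/-- `‖u‖ φ_t(u) ≤ √t ⋅ (2πt)^{-d/2}` -/
lemma norm_mul_gaussKernel_le (ht : 0 < t) (u : Vec d) :
    ‖u‖ * gaussKernel d t u ≤ Real.sqrt t * (2 * π * t) ^ (-(d : ℝ) / 2) := by
  have h2 : (0:ℝ) < 2 * π * t := by positivity
  have hc := Real.rpow_pos_of_pos h2 (-(d : ℝ) / 2)
  unfold gaussKernel
  rw [mul_comm ((2 * π * t) ^ (-(d : ℝ) / 2)) (Real.exp _), ← mul_assoc]
  apply mul_le_mul_of_nonneg_right _ (le_of_lt hc)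
  -- ‖u‖ * exp(-‖u‖²/(2t)) ≤ √t
  have key : (‖u‖ * Real.exp (-‖u‖^2/(2*t)))^2 ≤ t := by
    have hs : 0 ≤ ‖u‖^2 / t := by positivity
    have := sexp_le_one hs
    have hexp : Real.exp (-‖u‖ ^ 2 / (2 * t)) ^ 2 = Real.exp (-(‖u‖^2/t)) := by
      rw [sq, ← Real.exp_add]
      congr 1; field_simp; ring
    calc (‖u‖ * Real.exp (-‖u‖^2/(2*t)))^2 = t * (‖u‖^2/t * Real.exp (-(‖u‖^2/t))) := by
          rw [mul_pow, hexp]; field_simp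
      _ ≤ t * 1 := by apply mul_le_mul_of_nonneg_left _ (le_of_lt ht); exact sexp_le_one hs
      _ = t := mul_one t
  have h1 : 0 ≤ ‖u‖ * Real.exp (-‖u‖^2/(2*t)) := by positivity
  nlinarith [Real.sq_sqrt (le_of_lt ht), Real.sqrt_nonneg t]

/-- `(t⁻¹ φ_t(u))² ‖u‖² ≤ t⁻¹ (2πt)^{-d/2} φ_t(u)` -/
lemma grad_sq_le (ht : 0 < t) (u : Vec d) :
    (t⁻¹ * gaussKernel d t u) ^ 2 * ‖u‖ ^ 2 ≤
      t⁻¹ * (2 * π * t) ^ (-(d : ℝ) / 2) * gaussKernel d t u := by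
  have h2 : (0:ℝ) < 2 * π * t := by positivity
  have hc := Real.rpow_pos_of_pos h2 (-(d : ℝ) / 2)
  set c := (2 * π * t) ^ (-(d : ℝ) / 2) with hcdef
  have hs : 0 ≤ ‖u‖^2 / t := by positivity
  have key := sexp_le_exp_half hs
  unfold gaussKernel
  rw [← hcdef]
  have hexp : Real.exp (-‖u‖ ^ 2 / (2 * t)) ^ 2 = Real.exp (-(‖u‖^2/t)) := by
    rw [sq, ← Real.exp_add]; congr 1; field_simp; ring
  have hexp2 : Real.exp (-(‖u‖^2/t/2)) = Real.exp (-‖u‖ ^ 2 / (2*t)) := by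
    congr 1; field_simp; try (left; ring)
  -- goal: (t⁻¹ * (c * e))^2 * ‖u‖^2 ≤ t⁻¹ * c * (c * e)
  have expand : (t⁻¹ * (c * Real.exp (-‖u‖ ^ 2 / (2 * t)))) ^ 2 * ‖u‖ ^ 2
      = t⁻¹ * c * (c * ((‖u‖^2/t) * Real.exp (-(‖u‖^2/t)))) := by
    rw [mul_pow, mul_pow, hexp]; field_simp
  rw [expand]
  have : (‖u‖^2/t) * Real.exp (-(‖u‖^2/t)) ≤ Real.exp (-‖u‖ ^ 2 / (2*t)) := by
    calc (‖u‖^2/t) * Real.exp (-(‖u‖^2/t)) ≤ Real.exp (-((‖u‖^2/t)/2)) := key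
      _ = Real.exp (-‖u‖ ^ 2 / (2*t)) := hexp2
  have h3 : 0 < t⁻¹ * c := by positivity
  exact mul_le_mul_of_nonneg_left (mul_le_mul_of_nonneg_left this hc.le) h3.le

end S15
namespace S15B

open S15

lemma integrable_of_bdd {α : Type*} [MeasurableSpace α] {μ : Measure α} [IsFiniteMeasure μ]
    {E : Type*} [NormedAddCommGroup E] {f : α → E} (hf : AEStronglyMeasurable f μ) (B : ℝ)
    (hB : ∀ y, ‖f y‖ ≤ B) : Integrable f μ :=
  Integrable.mono' (integrable_const B) hf (Filter.Eventually.of_forall hB)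

variable {d : ℕ} {t : ℝ} {P0 : Measure (Vec d)}

lemma integrable_gauss (ht : 0 < t) [IsProbabilityMeasure P0] (x : Vec d) :
    Integrable (fun y => gaussKernel d t (x - y)) P0 := by
  apply integrable_of_bdd _ ((2 * π * t) ^ (-(d : ℝ) / 2)) (fun y => ?_)
  · exact ((gaussKernel_continuous ht).comp (continuous_const.sub continuous_id)).aestronglyMeasurable
  · rw [Real.norm_eq_abs, abs_of_pos (gaussKernel_pos ht _)]
    exact gaussKernel_le ht _

lemma integrable_gauss' (ht : 0 < t) [IsProbabilityMeasure P0] (x : Vec d) :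
    Integrable (fun y => gaussKernel d t (y - x)) P0 := by
  apply integrable_of_bdd _ ((2 * π * t) ^ (-(d : ℝ) / 2)) (fun y => ?_)
  · exact ((gaussKernel_continuous ht).comp (continuous_id.sub continuous_const)).aestronglyMeasurable
  · rw [Real.norm_eq_abs, abs_of_pos (gaussKernel_pos ht _)]
    exact gaussKernel_le ht _

lemma densVE_eq (ht : 0 < t) [IsProbabilityMeasure P0] (x : Vec d) :
    densVE P0 t x = ∫ y, gaussKernel d t (y - x) ∂P0 := by
  unfold densVE
  exact integral_congr_ae (Filter.Eventually.of_forall fun y => gaussKernel_symm x y)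

lemma densVE_pos (ht : 0 < t) [IsProbabilityMeasure P0] (x : Vec d) :
    0 < densVE P0 t x := by
  unfold densVE
  rw [integral_pos_iff_support_of_nonneg (fun y => (gaussKernel_pos ht _).le)
    (integrable_gauss ht x)]
  have : Function.support (fun y => gaussKernel d t (x - y)) = Set.univ := by
    ext y; simp [Function.mem_support, ne_of_gt (gaussKernel_pos ht (x - y))]
  rw [this]
  simp

lemma densVE_le (ht : 0 < t) [IsProbabilityMeasure P0] (x : Vec d) :
    densVE P0 t x ≤ (2 * π * t) ^ (-(d : ℝ) / 2) := by
  unfold densVE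
  calc ∫ y, gaussKernel d t (x - y) ∂P0 ≤ ∫ _, (2 * π * t) ^ (-(d : ℝ) / 2) ∂P0 :=
        integral_mono (integrable_gauss ht x) (integrable_const _)
          (fun y => gaussKernel_le ht _)
    _ = (2 * π * t) ^ (-(d : ℝ) / 2) := by simp

variable {n : ℕ}

lemma pi_map_eval (P0 : Measure (Vec d)) [IsProbabilityMeasure P0] (i : Fin n) :
    (Measure.pi fun _ : Fin n => P0).map (fun X => X i) = P0 := by
  ext s hs
  rw [Measure.map_apply (measurable_pi_apply i) hs]
  have hpre : (fun X : Fin n → Vec d => X i) ⁻¹' s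
      = Set.pi Set.univ (fun k => if k = i then s else Set.univ) := by
    ext X
    simp only [Set.mem_preimage, Set.mem_pi, Set.mem_univ, forall_true_left]
    constructor
    · intro h k; by_cases hk : k = i <;> simp [hk, h]
    · intro h; have := h i; simpa using this
  rw [hpre, Measure.pi_pi]
  have hcongr : ∀ k ∈ Finset.univ, P0 (if k = i then s else Set.univ)
      = if k = i then P0 s else 1 := by
    intro k _; by_cases hk : k = i <;> simp [hk]
  rw [Finset.prod_congr rfl hcongr, Finset.prod_ite_eq']
  simp

lemma pi_map_pair (P0 : Measure (Vec d)) [IsProbabilityMeasure P0] {i j : Fin n} (hij : i ≠ j) :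
    (Measure.pi fun _ : Fin n => P0).map (fun X => (X i, X j)) = P0.prod P0 := by
  have hmeas : Measurable fun X : Fin n → Vec d => (X i, X j) :=
    (measurable_pi_apply i).prodMk (measurable_pi_apply j)
  refine (Measure.prod_eq fun s u hs hu => ?_).symm
  rw [Measure.map_apply hmeas (hs.prod hu)]
  have hpre : (fun X : Fin n → Vec d => (X i, X j)) ⁻¹' (s ×ˢ u)
      = Set.pi Set.univ (fun k => if k = i then s else if k = j then u else Set.univ) := by
    ext X
    simp only [Set.mem_preimage, Set.mem_prod, Set.mem_pi, Set.mem_univ, forall_true_left]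
    constructor
    · rintro ⟨h1, h2⟩ k
      by_cases hk : k = i
      · simp [hk, h1]
      · by_cases hk2 : k = j <;> simp [hk, hk2, h2, Ne.symm hij]
    · intro h
      constructor
      · have := h i; simpa using this
      · have := h j; simpa [Ne.symm hij] using this
  rw [hpre, Measure.pi_pi]
  have hcongr : ∀ k ∈ Finset.univ,
      P0 (if k = i then s else if k = j then u else Set.univ)
      = (if k = i then P0 s else 1) * (if k = j then P0 u else 1) := by
    intro k _
    by_cases hk : k = i
    · subst hk; simp [hij]
    · by_cases hk2 : k = j <;> simp [hk, hk2, Ne.symm hij]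
  rw [Finset.prod_congr rfl hcongr, Finset.prod_mul_distrib,
    Finset.prod_ite_eq', Finset.prod_ite_eq']
  simp

end S15B
namespace S15C
open S15 S15B

lemma variance_bound {d n : ℕ} (hn : 1 ≤ n) (P0 : Measure (Vec d)) [IsProbabilityMeasure P0]
    {E : Type*} [NormedAddCommGroup E] [InnerProductSpace ℝ E] [CompleteSpace E]
    [MeasurableSpace E] [BorelSpace E] [SecondCountableTopology E]
    (V : Vec d → E) (hV : Measurable V) (B : ℝ) (hB : ∀ y, ‖V y‖ ≤ B) :
    ∫ X : Fin n → Vec d, ‖(n:ℝ)⁻¹ • (∑ i, V (X i)) - ∫ y, V y ∂P0‖^2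
        ∂(Measure.pi fun _ : Fin n => P0)
      ≤ (n:ℝ)⁻¹ * ∫ y, ‖V y‖^2 ∂P0 := by
  have hnR : (0:ℝ) < n := by exact_mod_cast Nat.lt_of_lt_of_le Nat.zero_lt_one hn
  have hnne : (n:ℝ) ≠ 0 := ne_of_gt hnR
  set μ := Measure.pi fun _ : Fin n => P0 with hμ
  have hVint : Integrable V P0 := integrable_of_bdd hV.aestronglyMeasurable B hB
  set m := ∫ y, V y ∂P0 with hm
  set W := fun y => V y - m with hWdef
  have hWmeas : Measurable W := hV.sub measurable_const
  have hWb : ∀ y, ‖W y‖ ≤ B + ‖m‖ := fun y =>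
    (norm_sub_le _ _).trans (add_le_add (hB y) le_rfl)
  have hWBnn : 0 ≤ B + ‖m‖ := (norm_nonneg _).trans (hWb 0)
  have hWint : Integrable W P0 := hVint.sub (integrable_const m)
  have hWzero : ∫ y, W y ∂P0 = 0 := by
    rw [hWdef]
    rw [integral_sub hVint (integrable_const m)]
    simp [← hm]
  -- pointwise rewriting
  have key1 : ∀ X : Fin n → Vec d,
      ‖(n:ℝ)⁻¹ • (∑ i, V (X i)) - m‖^2
        = (n:ℝ)⁻¹^2 * ∑ i, ∑ j, ⟪W (X i), W (X j)⟫_ℝ := by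
    intro X
    have h1 : (n:ℝ)⁻¹ • (∑ i, V (X i)) - m = (n:ℝ)⁻¹ • (∑ i, W (X i)) := by
      simp only [hWdef, Finset.sum_sub_distrib, Finset.sum_const, Finset.card_univ,
        Fintype.card_fin, smul_sub]
      rw [sub_eq_sub_iff_sub_eq_sub, sub_self, eq_comm, sub_eq_zero,
        ← Nat.cast_smul_eq_nsmul ℝ, smul_smul, inv_mul_cancel₀ hnne, one_smul]
    have h3 : ‖∑ i, W (X i)‖^2 = ∑ i, ∑ j, ⟪W (X i), W (X j)⟫_ℝ := by
      rw [← real_inner_self_eq_norm_sq, sum_inner]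
      exact Finset.sum_congr rfl fun i _ => inner_sum _ _ _
    rw [h1, norm_smul, mul_pow, h3]
    congr 1
    rw [norm_inv, Real.norm_natCast]
  have hterm_int : ∀ i j : Fin n,
      Integrable (fun X : Fin n → Vec d => ⟪W (X i), W (X j)⟫_ℝ) μ := by
    intro i j
    apply integrable_of_bdd
      (((hWmeas.comp (measurable_pi_apply i)).inner
        (hWmeas.comp (measurable_pi_apply j))).aestronglyMeasurable)
      ((B + ‖m‖) * (B + ‖m‖))
    intro X
    calc ‖⟪W (X i), W (X j)⟫_ℝ‖ ≤ ‖W (X i)‖ * ‖W (X j)‖ := norm_inner_le_norm _ _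
      _ ≤ (B + ‖m‖) * (B + ‖m‖) :=
          mul_le_mul (hWb _) (hWb _) (norm_nonneg _) hWBnn
  have hoff : ∀ i j : Fin n, i ≠ j → ∫ X, ⟪W (X i), W (X j)⟫_ℝ ∂μ = 0 := by
    intro i j hij
    have hmeas2 : Measurable fun X : Fin n → Vec d => (X i, X j) :=
      (measurable_pi_apply i).prodMk (measurable_pi_apply j)
    have hinner : Measurable fun p : Vec d × Vec d => ⟪W p.1, W p.2⟫_ℝ :=
      (hWmeas.comp measurable_fst).inner (hWmeas.comp measurable_snd)
    have step : ∫ X, ⟪W (X i), W (X j)⟫_ℝ ∂μ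
        = ∫ p : Vec d × Vec d, ⟪W p.1, W p.2⟫_ℝ ∂(P0.prod P0) := by
      rw [← pi_map_pair P0 hij, integral_map hmeas2.aemeasurable hinner.aestronglyMeasurable]
    rw [step]
    have hprodint : Integrable (fun p : Vec d × Vec d => ⟪W p.1, W p.2⟫_ℝ) (P0.prod P0) := by
      apply integrable_of_bdd hinner.aestronglyMeasurable ((B + ‖m‖) * (B + ‖m‖))
      intro p
      calc ‖⟪W p.1, W p.2⟫_ℝ‖ ≤ ‖W p.1‖ * ‖W p.2‖ := norm_inner_le_norm _ _
        _ ≤ (B + ‖m‖) * (B + ‖m‖) := mul_le_mul (hWb _) (hWb _) (norm_nonneg _) hWBnn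
    rw [integral_prod _ hprodint]
    have hin : ∀ a : Vec d, ∫ b, ⟪W a, W b⟫_ℝ ∂P0 = 0 := by
      intro a
      rw [integral_inner hWint (W a), hWzero, inner_zero_right]
    simp [hin]
  have hdiag : ∀ i : Fin n, ∫ X, ⟪W (X i), W (X i)⟫_ℝ ∂μ = ∫ y, ⟪W y, W y⟫_ℝ ∂P0 := by
    intro i
    have hinner : Measurable fun y : Vec d => ⟪W y, W y⟫_ℝ := hWmeas.inner hWmeas
    rw [← pi_map_eval P0 i, integral_map (measurable_pi_apply i).aemeasurable
      hinner.aestronglyMeasurable]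
  -- main computation
  have hfun : (fun X : Fin n → Vec d => ‖(n:ℝ)⁻¹ • (∑ i, V (X i)) - m‖^2)
      = fun X => (n:ℝ)⁻¹^2 * ∑ i, ∑ j, ⟪W (X i), W (X j)⟫_ℝ := funext key1
  rw [hfun, integral_const_mul]
  have hsplit : ∫ X, (∑ i, ∑ j, ⟪W (X i), W (X j)⟫_ℝ) ∂μ
      = ∑ i, ∑ j, ∫ X, ⟪W (X i), W (X j)⟫_ℝ ∂μ := by
    rw [integral_finset_sum _ (fun i _ => integrable_finset_sum _ (fun j _ => hterm_int i j))]
    exact Finset.sum_congr rfl fun i _ => integral_finset_sum _ fun j _ => hterm_int i j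
  rw [hsplit]
  have hsum : ∑ i, ∑ j, ∫ X, ⟪W (X i), W (X j)⟫_ℝ ∂μ
      = (n:ℝ) * ∫ y, ⟪W y, W y⟫_ℝ ∂P0 := by
    have : ∀ i : Fin n, ∑ j, ∫ X, ⟪W (X i), W (X j)⟫_ℝ ∂μ = ∫ y, ⟪W y, W y⟫_ℝ ∂P0 := by
      intro i
      rw [Finset.sum_eq_single i (fun j _ hji => hoff i j (Ne.symm hji)) (by simp)]
      exact hdiag i
    rw [Finset.sum_congr rfl fun i _ => this i]
    simp [mul_comm]
  rw [hsum]
  -- ∫ ⟪W, W⟫ = ∫ ‖V‖² - ‖m‖²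
  have hnormVint : Integrable (fun y => ‖V y‖^2) P0 := by
    apply integrable_of_bdd (hV.norm.pow measurable_const).aestronglyMeasurable (B^2)
    intro y
    rw [Real.norm_eq_abs, abs_of_nonneg (by positivity)]
    exact pow_le_pow_left₀ (norm_nonneg _) (hB y) 2
  have hinnerVint : Integrable (fun y => ⟪m, V y⟫_ℝ) P0 := by
    apply integrable_of_bdd ((measurable_const.inner hV).aestronglyMeasurable) (‖m‖ * B)
    intro y
    calc ‖⟪m, V y⟫_ℝ‖ ≤ ‖m‖ * ‖V y‖ := norm_inner_le_norm _ _
      _ ≤ ‖m‖ * B := mul_le_mul_of_nonneg_left (hB y) (norm_nonneg _)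
  have hWW : ∫ y, ⟪W y, W y⟫_ℝ ∂P0 = ∫ y, ‖V y‖^2 ∂P0 - ‖m‖^2 := by
    have hpt : ∀ y, ⟪W y, W y⟫_ℝ = ‖V y‖^2 - 2 * ⟪m, V y⟫_ℝ + ‖m‖^2 := by
      intro y
      rw [hWdef, real_inner_self_eq_norm_sq, norm_sub_sq_real, real_inner_comm (V y) m]
    rw [integral_congr_ae (Filter.Eventually.of_forall hpt)]
    rw [integral_add (by exact (hnormVint.sub (hinnerVint.const_mul 2))) (integrable_const _)]
    rw [integral_sub hnormVint (hinnerVint.const_mul 2)]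
    rw [integral_const_mul, integral_inner hVint, ← hm, real_inner_self_eq_norm_sq]
    simp only [integral_const, measure_univ, ENNReal.toReal_one, probReal_univ, one_smul, smul_eq_mul]
    ring
  rw [hWW]
  have hmsq : (0:ℝ) ≤ ‖m‖^2 := by positivity
  have hVnn : 0 ≤ ∫ y, ‖V y‖^2 ∂P0 := integral_nonneg fun y => by positivity
  calc (n:ℝ)⁻¹^2 * ((n:ℝ) * (∫ y, ‖V y‖^2 ∂P0 - ‖m‖^2))
      ≤ (n:ℝ)⁻¹^2 * ((n:ℝ) * ∫ y, ‖V y‖^2 ∂P0) := by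
        apply mul_le_mul_of_nonneg_left _ (by positivity)
        apply mul_le_mul_of_nonneg_left _ (le_of_lt hnR)
        linarith
    _ = (n:ℝ)⁻¹ * ∫ y, ‖V y‖^2 ∂P0 := by
        field_simp
end S15C
namespace S15D
open S15 S15B S15C InnerProductSpace

variable {d : ℕ} {t : ℝ}

lemma hasGradientAt_gauss_master (ht : 0 < t) (u : Vec d) :
    HasGradientAt (gaussKernel d t) (-(t⁻¹ * gaussKernel d t u) • u) u := by
  have htne : t ≠ 0 := ne_of_gt ht
  set C := (2 * π * t) ^ (-(d : ℝ) / 2) with hC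
  set r : ℝ := -(2*t)⁻¹ with hr
  have hq : HasFDerivAt (fun v : Vec d => ⟪v, v⟫_ℝ)
      ((fderivInnerCLM ℝ ((id u : Vec d), (id u : Vec d))).comp
        ((ContinuousLinearMap.id ℝ (Vec d)).prod (ContinuousLinearMap.id ℝ (Vec d)))) u :=
    (hasFDerivAt_id u).inner ℝ (hasFDerivAt_id u)
  have h2 := ((hq.mul_const r).exp).const_mul C
  have hfun : gaussKernel d t = fun v : Vec d => C * Real.exp (⟪v, v⟫_ℝ * r) := by
    funext v
    unfold gaussKernel
    rw [← hC, real_inner_self_eq_norm_sq]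
    congr 1
    rw [hr]
    field_simp
  rw [hasGradientAt_iff_hasFDerivAt, hfun]
  refine h2.congr_fderiv ?_
  apply ContinuousLinearMap.ext
  intro v
  simp only [ContinuousLinearMap.smul_apply, ContinuousLinearMap.comp_apply,
    ContinuousLinearMap.prod_apply, ContinuousLinearMap.coe_id', id_eq,
    fderivInnerCLM_apply, toDual_apply_apply, smul_eq_mul]
  rw [real_inner_smul_left, real_inner_comm u v]
  rw [hr]
  field_simp
  ring

lemma hasGradientAt_gauss_sub (ht : 0 < t) (y x : Vec d) :
    HasGradientAt (fun z => gaussKernel d t (z - y))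
      (-(t⁻¹ * gaussKernel d t (x - y)) • (x - y)) x := by
  have h := hasGradientAt_gauss_master ht (x - y)
  rw [hasGradientAt_iff_hasFDerivAt] at h ⊢
  have hsub : HasFDerivAt (fun z : Vec d => z - y) (ContinuousLinearMap.id ℝ (Vec d)) x :=
    (hasFDerivAt_id x).sub_const y
  have h2 := h.comp x hsub
  exact h2.congr_fderiv (ContinuousLinearMap.comp_id _)

lemma hasGradientAt_gauss_sub' (ht : 0 < t) (y x : Vec d) :
    HasGradientAt (fun z => gaussKernel d t (y - z))
      ((t⁻¹ * gaussKernel d t (y - x)) • (y - x)) x := by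
  have h := hasGradientAt_gauss_master ht (y - x)
  rw [hasGradientAt_iff_hasFDerivAt] at h ⊢
  have hsub : HasFDerivAt (fun z : Vec d => y - z) (-(ContinuousLinearMap.id ℝ (Vec d))) x :=
    (hasFDerivAt_id x).const_sub y
  have h2 := h.comp x hsub
  have hfn : (gaussKernel d t ∘ fun z : Vec d => y - z) = fun z => gaussKernel d t (y - z) := rfl
  rw [hfn] at h2
  refine h2.congr_fderiv ?_
  apply ContinuousLinearMap.ext
  intro v
  simp only [ContinuousLinearMap.comp_apply, ContinuousLinearMap.neg_apply,
    ContinuousLinearMap.coe_id', id_eq, toDual_apply_apply]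
  rw [inner_neg_right, real_inner_smul_left, real_inner_smul_left]
  ring

lemma gHat_eq {n : ℕ} (t : ℝ) (X : Fin n → Vec d) (x : Vec d) :
    gHat t X x = (n:ℝ)⁻¹ • ∑ i, (t⁻¹ * gaussKernel d t (X i - x)) • (X i - x) := by
  unfold gHat
  rw [mul_inv, mul_smul]
  congr 1
  rw [Finset.smul_sum]
  exact Finset.sum_congr rfl fun i _ => smul_smul _ _ _

lemma hasGradientAt_kde {n : ℕ} (ht : 0 < t) (X : Fin n → Vec d) (x : Vec d) :
    HasGradientAt (fun z => kde t X z) (gHat t X x) x := by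
  have h : ∀ i : Fin n, HasFDerivAt (fun z => gaussKernel d t (X i - z))
      (toDual ℝ (Vec d) ((t⁻¹ * gaussKernel d t (X i - x)) • (X i - x))) x := fun i =>
    hasGradientAt_iff_hasFDerivAt.mp (hasGradientAt_gauss_sub' ht (X i) x)
  have hsum := HasFDerivAt.fun_sum (u := Finset.univ) (fun i _ => h i)
  have h2 := hsum.const_mul (n:ℝ)⁻¹
  rw [hasGradientAt_iff_hasFDerivAt]
  have hkde : (fun z => kde t X z)
      = fun z => (n:ℝ)⁻¹ * ∑ i, gaussKernel d t (X i - z) := rfl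
  rw [hkde]
  refine h2.congr_fderiv ?_
  rw [gHat_eq, _root_.map_smul, _root_.map_sum]

lemma gradient_kde_eq {n : ℕ} (ht : 0 < t) (X : Fin n → Vec d) (x : Vec d) :
    gradient (kde t X) x = gHat t X x :=
  (hasGradientAt_kde ht X x).gradient

variable {P0 : Measure (Vec d)}

lemma hasGradientAt_densVE (ht : 0 < t) [IsProbabilityMeasure P0] (x : Vec d) :
    HasGradientAt (densVE P0 t) (gBar P0 t x) x := by
  have htne : t ≠ 0 := ne_of_gt ht
  set C := (2 * π * t) ^ (-(d : ℝ) / 2) with hC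
  set F' : Vec d → Vec d → (Vec d →L[ℝ] ℝ) := fun z y =>
    toDual ℝ (Vec d) (-(t⁻¹ * gaussKernel d t (z - y)) • (z - y)) with hF'
  have hVcont : ∀ z : Vec d, Continuous fun y : Vec d =>
      -(t⁻¹ * gaussKernel d t (z - y)) • (z - y) := by
    intro z
    apply Continuous.fun_smul
    · exact ((continuous_const.mul ((gaussKernel_continuous ht).comp
        (continuous_const.sub continuous_id))).neg)
    · exact continuous_const.sub continuous_id
  have key : HasFDerivAt (fun z => ∫ y, gaussKernel d t (z - y) ∂P0)
      (∫ y, F' x y ∂P0) x := by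
    apply hasFDerivAt_integral_of_dominated_of_fderiv_le (s := Metric.ball x 1) (Metric.ball_mem_nhds x one_pos)
      (bound := fun _ => t⁻¹ * (Real.sqrt t * C))
    · exact Filter.Eventually.of_forall fun z =>
        ((gaussKernel_continuous ht).comp
          (continuous_const.sub continuous_id)).aestronglyMeasurable
    · exact integrable_gauss ht x
    · exact ((toDual ℝ (Vec d)).continuous.comp (hVcont x)).aestronglyMeasurable
    · apply Filter.Eventually.of_forall
      intro y z _
      rw [hF']
      simp only
      rw [LinearIsometryEquiv.norm_map, norm_smul, Real.norm_eq_abs, abs_neg,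
        abs_of_nonneg (mul_nonneg (inv_nonneg.mpr ht.le) (gaussKernel_pos ht _).le)]
      calc t⁻¹ * gaussKernel d t (z - y) * ‖z - y‖
          = t⁻¹ * (‖z - y‖ * gaussKernel d t (z - y)) := by ring
        _ ≤ t⁻¹ * (Real.sqrt t * C) := by
            apply mul_le_mul_of_nonneg_left _ (inv_nonneg.mpr ht.le)
            exact norm_mul_gaussKernel_le ht (z - y)
    · exact integrable_const _
    · apply Filter.Eventually.of_forall
      intro y z _
      exact hasGradientAt_iff_hasFDerivAt.mp (hasGradientAt_gauss_sub ht y z)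
  have hint : ∫ y, F' x y ∂P0 = toDual ℝ (Vec d) (gBar P0 t x) := by
    have hpt : ∀ y : Vec d, -(t⁻¹ * gaussKernel d t (x - y)) • (x - y)
        = t⁻¹ • (gaussKernel d t (y - x) • (y - x)) := by
      intro y
      rw [gaussKernel_symm x y, smul_smul, neg_smul, ← smul_neg, neg_sub]
    have hvecint : ∫ y, -(t⁻¹ * gaussKernel d t (x - y)) • (x - y) ∂P0 = gBar P0 t x := by
      rw [integral_congr_ae (Filter.Eventually.of_forall hpt), integral_smul]
      rfl
    calc ∫ y, F' x y ∂P0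
        = ∫ y, (toDual ℝ (Vec d)).toLinearIsometry
            (-(t⁻¹ * gaussKernel d t (x - y)) • (x - y)) ∂P0 := rfl
      _ = (toDual ℝ (Vec d)).toLinearIsometry
            (∫ y, -(t⁻¹ * gaussKernel d t (x - y)) • (x - y) ∂P0) :=
          (toDual ℝ (Vec d)).toLinearIsometry.integral_comp_comm _
      _ = toDual ℝ (Vec d) (gBar P0 t x) := by rw [hvecint]; rfl
  rw [hasGradientAt_iff_hasFDerivAt, ← hint]
  exact key

lemma gradient_densVE_eq (ht : 0 < t) [IsProbabilityMeasure P0] (x : Vec d) :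
    gradient (densVE P0 t) x = gBar P0 t x :=
  (hasGradientAt_densVE ht x).gradient

lemma scoreVE_eq (ht : 0 < t) [IsProbabilityMeasure P0] (x : Vec d) :
    scoreVE P0 t x = (densVE P0 t x)⁻¹ • gBar P0 t x := by
  unfold scoreVE scoreOf
  rw [gradient_densVE_eq ht x]

end S15D
namespace S15E
open S15 S15B S15C S15D

variable {d n : ℕ} {t : ℝ} {P0 : Measure (Vec d)}

lemma kde_meas (ht : 0 < t) (x : Vec d) :
    Measurable fun X : Fin n → Vec d => kde t X x := by
  unfold kde
  apply Measurable.const_mul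
  apply Finset.measurable_sum
  intro i _
  exact (gaussKernel_continuous ht).measurable.comp
    ((measurable_pi_apply i).sub measurable_const)

lemma gHat_meas (ht : 0 < t) (x : Vec d) :
    Measurable fun X : Fin n → Vec d => gHat t X x := by
  unfold gHat
  apply Measurable.fun_const_smul
  apply Finset.measurable_sum
  intro i _
  exact ((gaussKernel_continuous ht).measurable.comp
    ((measurable_pi_apply i).sub measurable_const)).smul
    ((measurable_pi_apply i).sub measurable_const)

lemma kde_nonneg (ht : 0 < t) (X : Fin n → Vec d) (x : Vec d) : 0 ≤ kde t X x := by
  unfold kde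
  apply mul_nonneg (by positivity)
  exact Finset.sum_nonneg fun i _ => (gaussKernel_pos ht _).le

lemma kde_le (ht : 0 < t) (X : Fin n → Vec d) (x : Vec d) :
    kde t X x ≤ (2 * π * t) ^ (-(d : ℝ) / 2) := by
  unfold kde
  rcases Nat.eq_zero_or_pos n with hn | hn
  · subst hn
    simp
    positivity
  calc (n : ℝ)⁻¹ * ∑ i, gaussKernel d t (X i - x)
      ≤ (n : ℝ)⁻¹ * ∑ _i : Fin n, (2 * π * t) ^ (-(d : ℝ) / 2) := by
        apply mul_le_mul_of_nonneg_left _ (by positivity)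
        exact Finset.sum_le_sum fun i _ => gaussKernel_le ht _
    _ = (2 * π * t) ^ (-(d : ℝ) / 2) := by
        rw [Finset.sum_const, Finset.card_univ, Fintype.card_fin, nsmul_eq_mul]
        field_simp

lemma gHat_norm_le (ht : 0 < t) (X : Fin n → Vec d) (x : Vec d) :
    ‖gHat t X x‖ ≤ t⁻¹ * (Real.sqrt t * (2 * π * t) ^ (-(d : ℝ) / 2)) := by
  rcases Nat.eq_zero_or_pos n with hn | hn
  · subst hn
    unfold gHat
    simp
    positivity
  rw [gHat_eq]
  calc ‖(n:ℝ)⁻¹ • ∑ i, (t⁻¹ * gaussKernel d t (X i - x)) • (X i - x)‖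
      ≤ (n:ℝ)⁻¹ * ∑ i, ‖(t⁻¹ * gaussKernel d t (X i - x)) • (X i - x)‖ := by
        rw [norm_smul, Real.norm_eq_abs, abs_of_nonneg (by positivity)]
        apply mul_le_mul_of_nonneg_left (norm_sum_le _ _) (by positivity)
    _ ≤ (n:ℝ)⁻¹ * ∑ _i : Fin n, t⁻¹ * (Real.sqrt t * (2 * π * t) ^ (-(d : ℝ) / 2)) := by
        apply mul_le_mul_of_nonneg_left _ (by positivity)
        apply Finset.sum_le_sum
        intro i _
        rw [norm_smul, Real.norm_eq_abs,
          abs_of_nonneg (mul_nonneg (inv_nonneg.mpr ht.le) (gaussKernel_pos ht _).le)]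
        calc t⁻¹ * gaussKernel d t (X i - x) * ‖X i - x‖
            = t⁻¹ * (‖X i - x‖ * gaussKernel d t (X i - x)) := by ring
          _ ≤ t⁻¹ * (Real.sqrt t * (2 * π * t) ^ (-(d : ℝ) / 2)) :=
              mul_le_mul_of_nonneg_left (norm_mul_gaussKernel_le ht _) (inv_nonneg.mpr ht.le)
    _ = t⁻¹ * (Real.sqrt t * (2 * π * t) ^ (-(d : ℝ) / 2)) := by
        rw [Finset.sum_const, Finset.card_univ, Fintype.card_fin, nsmul_eq_mul]
        field_simp

lemma kde_var (ht : 0 < t) (hn : 1 ≤ n) [IsProbabilityMeasure P0] (x : Vec d) :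
    ∫ X : Fin n → Vec d, (kde t X x - densVE P0 t x)^2 ∂(Measure.pi fun _ : Fin n => P0)
      ≤ (n:ℝ)⁻¹ * ((2 * π * t) ^ (-(d : ℝ) / 2) * densVE P0 t x) := by
  set c := (2 * π * t) ^ (-(d : ℝ) / 2) with hc
  have hcpos : 0 < c := Real.rpow_pos_of_pos (by positivity) _
  set V : Vec d → ℝ := fun y => gaussKernel d t (y - x) with hV
  have hVmeas : Measurable V := (gaussKernel_continuous ht).measurable.comp
    (measurable_id.sub measurable_const)
  have hVbd : ∀ y, ‖V y‖ ≤ c := fun y => by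
    rw [Real.norm_eq_abs, abs_of_pos (gaussKernel_pos ht _)]
    exact gaussKernel_le ht _
  have hbd := variance_bound hn P0 V hVmeas c hVbd
  have hmV : ∫ y, V y ∂P0 = densVE P0 t x := (densVE_eq ht x).symm
  have hlhs : ∀ X : Fin n → Vec d, (kde t X x - densVE P0 t x)^2
      = ‖(n:ℝ)⁻¹ • (∑ i, V (X i)) - ∫ y, V y ∂P0‖^2 := by
    intro X
    rw [hmV, Real.norm_eq_abs, sq_abs, smul_eq_mul]
    rfl
  have hVsq : ∫ y, ‖V y‖^2 ∂P0 ≤ c * densVE P0 t x := by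
    have hint1 : Integrable (fun y => ‖V y‖^2) P0 := by
      apply integrable_of_bdd (hVmeas.norm.pow measurable_const).aestronglyMeasurable (c^2)
      intro y
      rw [Real.norm_eq_abs, abs_of_nonneg (by positivity)]
      exact pow_le_pow_left₀ (norm_nonneg _) (hVbd y) 2
    have hint2 : Integrable (fun y => c * V y) P0 := (integrable_gauss' ht x).const_mul c
    calc ∫ y, ‖V y‖^2 ∂P0 ≤ ∫ y, c * V y ∂P0 := by
          apply integral_mono hint1 hint2
          intro y
          show ‖V y‖^2 ≤ c * V y
          rw [Real.norm_eq_abs, sq_abs]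
          exact gaussKernel_sq_le ht _
      _ = c * densVE P0 t x := by rw [integral_const_mul, ← hmV]
  calc ∫ X : Fin n → Vec d, (kde t X x - densVE P0 t x)^2 ∂(Measure.pi fun _ : Fin n => P0)
      = ∫ X : Fin n → Vec d, ‖(n:ℝ)⁻¹ • (∑ i, V (X i)) - ∫ y, V y ∂P0‖^2
          ∂(Measure.pi fun _ : Fin n => P0) :=
        integral_congr_ae (Filter.Eventually.of_forall hlhs)
    _ ≤ (n:ℝ)⁻¹ * ∫ y, ‖V y‖^2 ∂P0 := hbd
    _ ≤ (n:ℝ)⁻¹ * (c * densVE P0 t x) := by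
        apply mul_le_mul_of_nonneg_left hVsq (by positivity)

lemma gHat_var (ht : 0 < t) (hn : 1 ≤ n) [IsProbabilityMeasure P0] (x : Vec d) :
    ∫ X : Fin n → Vec d, ‖gHat t X x - gBar P0 t x‖^2 ∂(Measure.pi fun _ : Fin n => P0)
      ≤ (n:ℝ)⁻¹ * (t⁻¹ * ((2 * π * t) ^ (-(d : ℝ) / 2) * densVE P0 t x)) := by
  set c := (2 * π * t) ^ (-(d : ℝ) / 2) with hc
  have hcpos : 0 < c := Real.rpow_pos_of_pos (by positivity) _
  set V : Vec d → Vec d := fun y => (t⁻¹ * gaussKernel d t (y - x)) • (y - x) with hV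
  have hVmeas : Measurable V := by
    apply Measurable.fun_smul
    · exact (measurable_const.mul ((gaussKernel_continuous ht).measurable.comp
        (measurable_id.sub measurable_const)))
    · exact measurable_id.sub measurable_const
  have hVbd : ∀ y, ‖V y‖ ≤ t⁻¹ * (Real.sqrt t * c) := by
    intro y
    rw [hV]
    simp only
    rw [norm_smul, Real.norm_eq_abs,
      abs_of_nonneg (mul_nonneg (inv_nonneg.mpr ht.le) (gaussKernel_pos ht _).le)]
    calc t⁻¹ * gaussKernel d t (y - x) * ‖y - x‖
        = t⁻¹ * (‖y - x‖ * gaussKernel d t (y - x)) := by ring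
      _ ≤ t⁻¹ * (Real.sqrt t * c) :=
          mul_le_mul_of_nonneg_left (norm_mul_gaussKernel_le ht _) (inv_nonneg.mpr ht.le)
  have hbd := variance_bound hn P0 V hVmeas _ hVbd
  have hmV : ∫ y, V y ∂P0 = gBar P0 t x := by
    unfold gBar
    rw [hV]
    have hpt : ∀ y : Vec d, (t⁻¹ * gaussKernel d t (y - x)) • (y - x)
        = t⁻¹ • (gaussKernel d t (y - x) • (y - x)) := fun y => (smul_smul _ _ _).symm
    rw [integral_congr_ae (Filter.Eventually.of_forall hpt), integral_smul]
  have hlhs : ∀ X : Fin n → Vec d, ‖gHat t X x - gBar P0 t x‖^2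
      = ‖(n:ℝ)⁻¹ • (∑ i, V (X i)) - ∫ y, V y ∂P0‖^2 := by
    intro X
    rw [hmV, gHat_eq]
  have hVsq : ∫ y, ‖V y‖^2 ∂P0 ≤ t⁻¹ * (c * densVE P0 t x) := by
    have hint1 : Integrable (fun y => ‖V y‖^2) P0 := by
      apply integrable_of_bdd (hVmeas.norm.pow measurable_const).aestronglyMeasurable
        ((t⁻¹ * (Real.sqrt t * c))^2)
      intro y
      rw [Real.norm_eq_abs, abs_of_nonneg (by positivity)]
      exact pow_le_pow_left₀ (norm_nonneg _) (hVbd y) 2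
    have hint2 : Integrable (fun y => t⁻¹ * c * gaussKernel d t (y - x)) P0 :=
      (integrable_gauss' ht x).const_mul _
    calc ∫ y, ‖V y‖^2 ∂P0 ≤ ∫ y, t⁻¹ * c * gaussKernel d t (y - x) ∂P0 := by
          apply integral_mono hint1 hint2
          intro y
          show ‖V y‖^2 ≤ t⁻¹ * c * gaussKernel d t (y - x)
          rw [hV]
          simp only
          rw [norm_smul, mul_pow, Real.norm_eq_abs, sq_abs]
          exact grad_sq_le ht (y - x)
      _ = t⁻¹ * (c * densVE P0 t x) := by
          rw [integral_const_mul, ← densVE_eq ht x]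
          ring
  calc ∫ X : Fin n → Vec d, ‖gHat t X x - gBar P0 t x‖^2 ∂(Measure.pi fun _ : Fin n => P0)
      = ∫ X : Fin n → Vec d, ‖(n:ℝ)⁻¹ • (∑ i, V (X i)) - ∫ y, V y ∂P0‖^2
          ∂(Measure.pi fun _ : Fin n => P0) :=
        integral_congr_ae (Filter.Eventually.of_forall hlhs)
    _ ≤ (n:ℝ)⁻¹ * ∫ y, ‖V y‖^2 ∂P0 := hbd
    _ ≤ (n:ℝ)⁻¹ * (t⁻¹ * ((2 * π * t) ^ (-(d : ℝ) / 2) * densVE P0 t x)) :=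
        mul_le_mul_of_nonneg_left hVsq (by positivity)

lemma measurable_softThresh (η : ℝ) : Measurable (softThresh η) := by
  unfold softThresh
  apply Measurable.ite (measurableSet_le measurable_const measurable_id) measurable_const
  apply Measurable.ite (measurableSet_le measurable_id measurable_const) measurable_const
  apply Measurable.inv
  apply Measurable.add measurable_const
  apply Real.measurable_exp.comp
  apply Measurable.div
  · exact measurable_const.sub (measurable_const.mul
      ((measurable_const.mul measurable_id).div_const η |>.sub measurable_const))
  · exact (((measurable_const.mul measurable_id).div_const η |>.sub measurable_const)).mul
      (measurable_const.sub ((measurable_const.mul measurable_id).div_const η))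

end S15E

set_option maxHeartbeats 1000000 in
open S15 S15B S15C S15D S15E in
/-- Lemma 6: pointwise `L²` score error on the high-density region,
restricted to the good event `E_t(x)`. -/
theorem statement_15 :
    ∃ CE C : ℝ, 0 < CE ∧ 0 < C ∧
      ∀ (d n : ℕ) (t : ℝ) (P0 : Measure (Vec d)) (x : Vec d),
        1 ≤ d → 2 ≤ n → 0 < t → IsProbabilityMeasure P0 →
        max (4 * CE) 2 * etaThr d n t ≤ densVE P0 t x →
        (∫ X in {X : Fin n → Vec d |
            |kde t X x - densVE P0 t x| ≤
              CE * (Real.log n / (n * (2 * π * t) ^ ((d : ℝ) / 2)) +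
                Real.sqrt (densVE P0 t x * Real.log n /
                  (n * (2 * π * t) ^ ((d : ℝ) / 2))))},
            ‖scoreEst t X x - scoreVE P0 t x‖ ^ 2 ∂(Measure.pi fun _ : Fin n => P0))
          ≤ C * (1 / (n * (2 * π * t) ^ ((d : ℝ) / 2))) *
              (1 / t + ‖scoreVE P0 t x‖ ^ 2) * (densVE P0 t x)⁻¹ := by
  refine ⟨1/4, 8, by norm_num, by norm_num, ?_⟩
  intro d n t P0 x hd hn ht hP0 hdens
  haveI := hP0
  haveI : IsProbabilityMeasure (Measure.pi fun _ : Fin n => P0) := inferInstance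
  have h2πt : (0:ℝ) < 2 * π * t := by positivity
  have hcpos : (0:ℝ) < (2 * π * t) ^ (-(d : ℝ) / 2) := Real.rpow_pos_of_pos h2πt _
  have hppos : 0 < densVE P0 t x := densVE_pos ht x
  have hn1 : 1 ≤ n := le_trans one_le_two hn
  have hnR : (0:ℝ) < n := Nat.cast_pos.mpr (lt_of_lt_of_le Nat.zero_lt_one hn1)
  have hDpos : (0:ℝ) < (n:ℝ) * (2 * π * t) ^ ((d:ℝ)/2) :=
    mul_pos hnR (Real.rpow_pos_of_pos h2πt _)
  have hEeta : Real.log n / ((n:ℝ) * (2 * π * t) ^ ((d:ℝ)/2)) = etaThr d n t := rfl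
  have hηpos : 0 < etaThr d n t := by
    rw [← hEeta]
    apply div_pos _ hDpos
    exact Real.log_pos (by exact_mod_cast hn)
  have h2η : 2 * etaThr d n t ≤ densVE P0 t x := by
    have hmax : max (4 * (1/4 : ℝ)) 2 = 2 := by norm_num
    rw [hmax] at hdens
    exact hdens
  have hηp2 : etaThr d n t ≤ densVE P0 t x / 2 := by linarith
  have hpη : densVE P0 t x * Real.log n / ((n:ℝ) * (2 * π * t) ^ ((d:ℝ)/2))
      = densVE P0 t x * etaThr d n t := by
    rw [← hEeta, mul_div_assoc]
  have hsqrtle : Real.sqrt (densVE P0 t x * Real.log n /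
      ((n:ℝ) * (2 * π * t) ^ ((d:ℝ)/2))) ≤ densVE P0 t x := by
    rw [hpη]
    calc Real.sqrt (densVE P0 t x * etaThr d n t)
        ≤ Real.sqrt (densVE P0 t x * densVE P0 t x) :=
          Real.sqrt_le_sqrt (by nlinarith)
      _ = densVE P0 t x := Real.sqrt_mul_self hppos.le
  set A := {X : Fin n → Vec d |
      |kde t X x - densVE P0 t x| ≤
        1/4 * (Real.log n / (n * (2 * π * t) ^ ((d : ℝ) / 2)) +
          Real.sqrt (densVE P0 t x * Real.log n /
            (n * (2 * π * t) ^ ((d : ℝ) / 2))))} with hAdef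
  have hAmeas : MeasurableSet A :=
    measurableSet_le (((kde_meas ht x).sub measurable_const).abs) measurable_const
  have hrle : 1/4 * (Real.log n / ((n:ℝ) * (2 * π * t) ^ ((d : ℝ) / 2)) +
      Real.sqrt (densVE P0 t x * Real.log n /
        ((n:ℝ) * (2 * π * t) ^ ((d : ℝ) / 2)))) ≤ 3/8 * densVE P0 t x := by
    rw [hEeta]
    linarith
  have hkey : ∀ X ∈ A, densVE P0 t x / 2 ≤ kde t X x ∧ etaThr d n t ≤ kde t X x := by
    intro X hX
    rw [hAdef] at hX
    simp only [Set.mem_setOf_eq] at hX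
    have h1 := (abs_le.mp hX).1
    constructor
    · linarith
    · linarith
  have hscoreEq : ∀ X : Fin n → Vec d, scoreEst t X x
      = (softThresh (etaThr d n t) (kde t X x) / kde t X x) • gHat t X x := by
    intro X
    unfold scoreEst
    rw [gradient_kde_eq ht]
  have hscoreA : ∀ X ∈ A, scoreEst t X x = (kde t X x)⁻¹ • gHat t X x := by
    intro X hX
    rw [hscoreEq X]
    have h1 : softThresh (etaThr d n t) (kde t X x) = 1 := by
      unfold softThresh
      rw [if_pos ((hkey X hX).2)]
    rw [h1, one_div]
  have hsval : scoreVE P0 t x = (densVE P0 t x)⁻¹ • gBar P0 t x := scoreVE_eq ht x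
  -- pointwise bound on the event
  have hG : ∀ X ∈ A, ‖scoreEst t X x - scoreVE P0 t x‖^2
      ≤ 8 * (densVE P0 t x)⁻¹^2 * ‖gHat t X x - gBar P0 t x‖^2
        + 8 * ‖scoreVE P0 t x‖^2 * (densVE P0 t x)⁻¹^2
          * (kde t X x - densVE P0 t x)^2 := by
    intro X hX
    obtain ⟨hk2, hkη⟩ := hkey X hX
    have hkpos : 0 < kde t X x := lt_of_lt_of_le (by positivity) hk2
    rw [hscoreA X hX]
    have hdecomp : (kde t X x)⁻¹ • gHat t X x - scoreVE P0 t x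
        = (kde t X x)⁻¹ • (gHat t X x - gBar P0 t x)
          + ((kde t X x)⁻¹ - (densVE P0 t x)⁻¹) • gBar P0 t x := by
      rw [hsval, smul_sub, sub_smul]
      abel
    have hgBnorm : ‖gBar P0 t x‖ = densVE P0 t x * ‖scoreVE P0 t x‖ := by
      have h2 : gBar P0 t x = densVE P0 t x • scoreVE P0 t x := by
        rw [hsval, smul_smul, mul_inv_cancel₀ (ne_of_gt hppos), one_smul]
      rw [h2, norm_smul, Real.norm_eq_abs, abs_of_pos hppos]
    have hkinv : (kde t X x)⁻¹ ≤ 2 * (densVE P0 t x)⁻¹ := by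
      have h3 : (densVE P0 t x / 2)⁻¹ = 2 * (densVE P0 t x)⁻¹ := by
        rw [inv_div]
        ring
      rw [← h3]
      exact inv_anti₀ (by positivity) hk2
    have hnorm1 : ‖(kde t X x)⁻¹ • (gHat t X x - gBar P0 t x)‖
        ≤ 2 * (densVE P0 t x)⁻¹ * ‖gHat t X x - gBar P0 t x‖ := by
      rw [norm_smul, Real.norm_eq_abs, abs_of_pos (inv_pos.mpr hkpos)]
      exact mul_le_mul_of_nonneg_right hkinv (norm_nonneg _)
    have hinvdiff : |(kde t X x)⁻¹ - (densVE P0 t x)⁻¹|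
        ≤ |kde t X x - densVE P0 t x| * (2 * (densVE P0 t x)⁻¹ * (densVE P0 t x)⁻¹) := by
      have hsub : (kde t X x)⁻¹ - (densVE P0 t x)⁻¹
          = (densVE P0 t x - kde t X x) / (kde t X x * densVE P0 t x) := by
        field_simp
      rw [hsub, abs_div, abs_of_pos (mul_pos hkpos hppos), abs_sub_comm]
      have hden : densVE P0 t x / 2 * densVE P0 t x ≤ kde t X x * densVE P0 t x :=
        mul_le_mul_of_nonneg_right hk2 hppos.le
      calc |kde t X x - densVE P0 t x| / (kde t X x * densVE P0 t x)
          ≤ |kde t X x - densVE P0 t x| / (densVE P0 t x / 2 * densVE P0 t x) :=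
            div_le_div_of_nonneg_left (abs_nonneg _) (by positivity) hden
        _ = |kde t X x - densVE P0 t x| * (2 * (densVE P0 t x)⁻¹ * (densVE P0 t x)⁻¹) := by
            field_simp
    have hnorm2 : ‖((kde t X x)⁻¹ - (densVE P0 t x)⁻¹) • gBar P0 t x‖
        ≤ 2 * (densVE P0 t x)⁻¹
            * (|kde t X x - densVE P0 t x| * ‖scoreVE P0 t x‖) := by
      rw [norm_smul, Real.norm_eq_abs, hgBnorm]
      calc |(kde t X x)⁻¹ - (densVE P0 t x)⁻¹| * (densVE P0 t x * ‖scoreVE P0 t x‖)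
          ≤ |kde t X x - densVE P0 t x| * (2 * (densVE P0 t x)⁻¹ * (densVE P0 t x)⁻¹)
              * (densVE P0 t x * ‖scoreVE P0 t x‖) :=
            mul_le_mul_of_nonneg_right hinvdiff (by positivity)
        _ = 2 * (densVE P0 t x)⁻¹
              * (|kde t X x - densVE P0 t x| * ‖scoreVE P0 t x‖) := by
            field_simp
    have htot : ‖(kde t X x)⁻¹ • gHat t X x - scoreVE P0 t x‖
        ≤ 2 * (densVE P0 t x)⁻¹ * ‖gHat t X x - gBar P0 t x‖
          + 2 * (densVE P0 t x)⁻¹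
              * (|kde t X x - densVE P0 t x| * ‖scoreVE P0 t x‖) := by
      rw [hdecomp]
      exact (norm_add_le _ _).trans (add_le_add hnorm1 hnorm2)
    have hsq := pow_le_pow_left₀ (norm_nonneg _) htot 2
    refine hsq.trans ?_
    have hb2 : |kde t X x - densVE P0 t x|^2 = (kde t X x - densVE P0 t x)^2 :=
      sq_abs _
    set q := (densVE P0 t x)⁻¹ with hqdef
    set a := ‖gHat t X x - gBar P0 t x‖ with hadef
    set b := |kde t X x - densVE P0 t x| with hbdef
    set S := ‖scoreVE P0 t x‖ with hSdef
    have key2 : (a + b*S)^2 ≤ 2*a^2 + 2*(b*S)^2 := by nlinarith [sq_nonneg (a - b*S)]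
    calc (2*q*a + 2*q*(b*S))^2 = 4*q^2*(a+b*S)^2 := by ring
      _ ≤ 4*q^2*(2*a^2 + 2*(b*S)^2) := by
          apply mul_le_mul_of_nonneg_left key2 (by positivity)
      _ = 8 * q^2 * a^2 + 8*S^2*q^2*b^2 := by ring
      _ = 8 * q^2 * a^2 + 8*S^2*q^2*(kde t X x - densVE P0 t x)^2 := by rw [hb2]
  -- integrability
  have hI1int : Integrable (fun X : Fin n → Vec d => (kde t X x - densVE P0 t x)^2)
      (Measure.pi fun _ : Fin n => P0) := by
    apply integrable_of_bdd (((kde_meas ht x).sub measurable_const).pow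
      measurable_const).aestronglyMeasurable
      (((2 * π * t) ^ (-(d : ℝ) / 2) + densVE P0 t x)^2)
    intro X
    rw [Real.norm_eq_abs, abs_of_nonneg (sq_nonneg _)]
    apply sq_le_sq'
    · have := kde_nonneg ht X x
      simp only [Pi.sub_apply]
      linarith
    · have := kde_le ht X x
      simp only [Pi.sub_apply]
      linarith
  have hI2int : Integrable (fun X : Fin n → Vec d => ‖gHat t X x - gBar P0 t x‖^2)
      (Measure.pi fun _ : Fin n => P0) := by
    apply integrable_of_bdd (((gHat_meas ht x).sub measurable_const).norm.pow
      measurable_const).aestronglyMeasurable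
      ((t⁻¹ * (Real.sqrt t * (2 * π * t) ^ (-(d : ℝ) / 2)) + ‖gBar P0 t x‖)^2)
    intro X
    rw [Real.norm_eq_abs, abs_of_nonneg (by positivity)]
    apply pow_le_pow_left₀ (norm_nonneg _)
    exact (norm_sub_le _ _).trans (add_le_add (gHat_norm_le ht X x) le_rfl)
  have hGint : Integrable (fun X : Fin n → Vec d =>
      8 * (densVE P0 t x)⁻¹^2 * ‖gHat t X x - gBar P0 t x‖^2
        + 8 * ‖scoreVE P0 t x‖^2 * (densVE P0 t x)⁻¹^2
          * (kde t X x - densVE P0 t x)^2) (Measure.pi fun _ : Fin n => P0) :=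
    (hI2int.const_mul _).add (hI1int.const_mul _)
  have hfmeas : Measurable (fun X : Fin n → Vec d =>
      ‖scoreEst t X x - scoreVE P0 t x‖^2) := by
    have h1 : Measurable (fun X : Fin n → Vec d => scoreEst t X x) := by
      have h2 : (fun X : Fin n → Vec d => scoreEst t X x)
          = fun X => (softThresh (etaThr d n t) (kde t X x) / kde t X x) • gHat t X x :=
        funext hscoreEq
      rw [h2]
      exact (((measurable_softThresh _).comp (kde_meas ht x)).div
        (kde_meas ht x)).smul (gHat_meas ht x)
    exact (h1.sub measurable_const).norm.pow measurable_const
  have hfA_int : IntegrableOn (fun X : Fin n → Vec d =>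
      ‖scoreEst t X x - scoreVE P0 t x‖^2) A (Measure.pi fun _ : Fin n => P0) := by
    apply Integrable.mono' hGint.integrableOn hfmeas.aestronglyMeasurable.restrict
    rw [ae_restrict_iff' hAmeas]
    apply Filter.Eventually.of_forall
    intro X hXA
    rw [Real.norm_eq_abs, abs_of_nonneg (by positivity)]
    exact hG X hXA
  -- main chain
  calc (∫ X in A, ‖scoreEst t X x - scoreVE P0 t x‖ ^ 2
        ∂(Measure.pi fun _ : Fin n => P0))
      ≤ ∫ X in A, (8 * (densVE P0 t x)⁻¹^2 * ‖gHat t X x - gBar P0 t x‖^2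
          + 8 * ‖scoreVE P0 t x‖^2 * (densVE P0 t x)⁻¹^2
            * (kde t X x - densVE P0 t x)^2) ∂(Measure.pi fun _ : Fin n => P0) :=
        setIntegral_mono_on hfA_int hGint.integrableOn hAmeas hG
    _ ≤ ∫ X, (8 * (densVE P0 t x)⁻¹^2 * ‖gHat t X x - gBar P0 t x‖^2
          + 8 * ‖scoreVE P0 t x‖^2 * (densVE P0 t x)⁻¹^2
            * (kde t X x - densVE P0 t x)^2) ∂(Measure.pi fun _ : Fin n => P0) :=
        setIntegral_le_integral hGint
          (Filter.Eventually.of_forall fun X => by positivity)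
    _ = 8 * (densVE P0 t x)⁻¹^2
          * (∫ X, ‖gHat t X x - gBar P0 t x‖^2 ∂(Measure.pi fun _ : Fin n => P0))
        + 8 * ‖scoreVE P0 t x‖^2 * (densVE P0 t x)⁻¹^2
          * (∫ X, (kde t X x - densVE P0 t x)^2 ∂(Measure.pi fun _ : Fin n => P0)) := by
        rw [integral_add (hI2int.const_mul _) (hI1int.const_mul _),
          integral_const_mul, integral_const_mul]
    _ ≤ 8 * (densVE P0 t x)⁻¹^2
          * ((n:ℝ)⁻¹ * (t⁻¹ * ((2 * π * t) ^ (-(d : ℝ) / 2) * densVE P0 t x)))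
        + 8 * ‖scoreVE P0 t x‖^2 * (densVE P0 t x)⁻¹^2
          * ((n:ℝ)⁻¹ * ((2 * π * t) ^ (-(d : ℝ) / 2) * densVE P0 t x)) :=
        add_le_add
          (mul_le_mul_of_nonneg_left (gHat_var ht hn1 x) (by positivity))
          (mul_le_mul_of_nonneg_left (kde_var ht hn1 x) (by positivity))
    _ = 8 * (1 / ((n:ℝ) * (2 * π * t) ^ ((d : ℝ) / 2)))
          * (1 / t + ‖scoreVE P0 t x‖ ^ 2) * (densVE P0 t x)⁻¹ := by
        have hcc : ((2 * π * t) ^ ((d:ℝ)/2) : ℝ)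
            = ((2 * π * t) ^ (-(d:ℝ)/2))⁻¹ := by
          rw [← Real.rpow_neg h2πt.le]
          congr 1
          ring
        rw [hcc]
        field_simp
end
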